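/- arXiv:2409.00117 — 4 statements merged into one kernel-verified Lean document; each statement's English description precedes it below -/
import Mathlib

section
/- Let $n\ge 2$ and let $x,z\in\mathbb{R}^n$ be distinct. For $y\in\mathbb{R}^n\setminus\{x,z\}$ define $E_{xyyz}=\frac{x-y}{|x-y|}-\frac{y-z}{|y-z|}$. Write $y=\frac{x+z}{2}+s_y\frac{x-z}{|x-z|}+h_y$ with $s_y\in\mathbb{R}$ and $h_y\perp(x-z)$, and let $\Gamma=\{y:0<|h_y|<\frac{|x-z|}{2}-|s_y|\}$. Then there are absolute constants $c,C>0$ (independent of $x,z,y$) such that: (i) for $y\in\Gamma$, $c\,\frac{|h_y|}{\min\{|x-y|,|y-z|\}}\le |E_{xyyz}|\le C\,\frac{|h_y|}{\min\{|x-y|,|y-z|\}}$; (ii) for $y\notin\overline{\Gamma}$ with $y\ne x,z$, $c\le |E_{xyyz}|\le 2$. -/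
/-!
Put `w = (x - z)/|x - z|`, `r = |h|`, `p = |x - z|/2 - s` and `q = |x - z|/2 + s`, so that
`x - y = p w - h` and `y - z = q w + h` with `w ⟂ h`. Then `E` lies in the plane spanned by
`w` and `h`, and with `A = |x - y|`, `B = |y - z|` Pythagoras gives
`|E|² = (p/A - q/B)² + (r/A + r/B)²`, where `p/A`, `q/B` are the cosines and `r/A`, `r/B` the
sines of the angles that `x - y` and `y - z` make with `w`. The second term alone is at least
`(r / min A B)²`. In `Γ` both cosines lie within `r/A`, resp. `r/B`, of `1`, so the first term
is at most the second. Outside `Γ`, if say `p < r`, either `p ≤ 0` and `|E|² ≥ (q/B)² + (r/B)² = 1`,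
or the sine `r/A` exceeds `1/√2`.
-/

open RealInnerProductSpace

section Planar

variable {p q r A B : ℝ}

lemma div_min_le_add_div (hr : 0 ≤ r) (hA : 0 < A) (hB : 0 < B) :
    r / min A B ≤ r / A + r / B := by
  rcases min_choice A B with h | h <;> rw [h] <;>
    linarith [div_nonneg hr hA.le, div_nonneg hr hB.le]

lemma add_div_le_two_mul_div_min (hr : 0 ≤ r) (hA : 0 < A) (hB : 0 < B) :
    r / A + r / B ≤ 2 * (r / min A B) := by
  have hm : 0 < min A B := lt_min hA hB
  linarith [div_le_div_of_nonneg_left hr hm (min_le_left A B),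
    div_le_div_of_nonneg_left hr hm (min_le_right A B)]

lemma one_sub_div_le_div (hp : 0 ≤ p) (hr : 0 ≤ r) (hA : 0 < A) (hA2 : A ^ 2 = p ^ 2 + r ^ 2) :
    1 - r / A ≤ p / A ∧ p / A ≤ 1 := by
  have hAle : A ≤ p + r := by nlinarith
  have hpA : p ≤ A := by nlinarith
  constructor
  · rw [sub_le_iff_le_add, ← add_div, le_div_iff₀ hA]; linarith
  · rwa [div_le_one hA]

lemma sq_sub_div_le_sq_add_div (hp : 0 ≤ p) (hq : 0 ≤ q) (hr : 0 ≤ r) (hA : 0 < A) (hB : 0 < B)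
    (hA2 : A ^ 2 = p ^ 2 + r ^ 2) (hB2 : B ^ 2 = q ^ 2 + r ^ 2) :
    (p / A - q / B) ^ 2 ≤ (r / A + r / B) ^ 2 := by
  obtain ⟨hp1, hp2⟩ := one_sub_div_le_div hp hr hA hA2
  obtain ⟨hq1, hq2⟩ := one_sub_div_le_div hq hr hB hB2
  exact sq_le_sq' (by linarith [div_nonneg hr hA.le]) (by linarith [div_nonneg hr hB.le])

lemma quarter_le_of_lt (hpq : 0 < p + q) (hpr : p < r) (hr : 0 ≤ r) (hA : 0 < A) (hB : 0 < B)
    (hA2 : A ^ 2 = p ^ 2 + r ^ 2) (hB2 : B ^ 2 = q ^ 2 + r ^ 2) :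
    1 / 4 ≤ (p / A - q / B) ^ 2 + (r / A + r / B) ^ 2 := by
  have hrA : 0 ≤ r / A := div_nonneg hr hA.le
  have hrB : 0 ≤ r / B := div_nonneg hr hB.le
  rcases le_or_gt p 0 with hp | hp
  · have hpA : p / A ≤ 0 := div_nonpos_of_nonpos_of_nonneg hp hA.le
    have hqB : 0 ≤ q / B := div_nonneg (by linarith) hB.le
    have hunit : (q / B) ^ 2 + (r / B) ^ 2 = 1 := by field_simp; linarith
    nlinarith
  · have hsin : 1 / 2 ≤ (r / A) ^ 2 := by
      rw [div_pow, le_div_iff₀ (by positivity)]; nlinarith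
    nlinarith

lemma sq_div_min_le (hr : 0 ≤ r) (hA : 0 < A) (hB : 0 < B) :
    (r / min A B) ^ 2 ≤ (p / A - q / B) ^ 2 + (r / A + r / B) ^ 2 := by
  have := pow_le_pow_left₀ (div_nonneg hr (lt_min hA hB).le) (div_min_le_add_div hr hA hB) 2
  nlinarith

lemma le_sq_three_mul_div_min (hp : 0 ≤ p) (hq : 0 ≤ q) (hr : 0 ≤ r) (hA : 0 < A) (hB : 0 < B)
    (hA2 : A ^ 2 = p ^ 2 + r ^ 2) (hB2 : B ^ 2 = q ^ 2 + r ^ 2) :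
    (p / A - q / B) ^ 2 + (r / A + r / B) ^ 2 ≤ (3 * (r / min A B)) ^ 2 := by
  have h2 := add_div_le_two_mul_div_min hr hA hB
  have h0 : 0 ≤ r / A + r / B := by positivity
  nlinarith [sq_sub_div_le_sq_add_div hp hq hr hA hB hA2 hB2]

lemma quarter_le_of_min_lt (hpq : 0 < p + q) (hr : 0 ≤ r) (hmin : min p q < r)
    (hA : 0 < A) (hB : 0 < B) (hA2 : A ^ 2 = p ^ 2 + r ^ 2) (hB2 : B ^ 2 = q ^ 2 + r ^ 2) :
    (1 / 2) ^ 2 ≤ (p / A - q / B) ^ 2 + (r / A + r / B) ^ 2 := by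
  rcases min_lt_iff.1 hmin with hpr | hqr
  · linarith [quarter_le_of_lt hpq hpr hr hA hB hA2 hB2]
  · have hswap : (p / A - q / B) ^ 2 + (r / A + r / B) ^ 2 =
        (q / B - p / A) ^ 2 + (r / B + r / A) ^ 2 := by ring
    linarith [quarter_le_of_lt (by linarith) hqr hr hB hA hB2 hA2]

end Planar

section Orthogonal

variable {V : Type*} [NormedAddCommGroup V] [InnerProductSpace ℝ V] {w h : V}

lemma norm_smul_add_smul_sq (hw : ‖w‖ = 1) (hwh : ⟪w, h⟫ = 0) (a b : ℝ) :
    ‖a • w + b • h‖ ^ 2 = a ^ 2 + (b * ‖h‖) ^ 2 := by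
  have horth : ⟪a • w, b • h⟫ = 0 := by simp [real_inner_smul_left, real_inner_smul_right, hwh]
  rw [sq, norm_add_sq_eq_norm_sq_add_norm_sq_real horth, norm_smul, norm_smul, hw,
    Real.norm_eq_abs, Real.norm_eq_abs, mul_pow, ← sq_abs a, ← sq_abs b]
  ring

lemma norm_smul_sub_sq (hw : ‖w‖ = 1) (hwh : ⟪w, h⟫ = 0) (p : ℝ) :
    ‖p • w - h‖ ^ 2 = p ^ 2 + ‖h‖ ^ 2 := by
  simpa [sub_eq_add_neg] using norm_smul_add_smul_sq hw hwh p (-1)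

lemma norm_smul_add_sq (hw : ‖w‖ = 1) (hwh : ⟪w, h⟫ = 0) (q : ℝ) :
    ‖q • w + h‖ ^ 2 = q ^ 2 + ‖h‖ ^ 2 := by
  simpa using norm_smul_add_smul_sq hw hwh q 1

lemma norm_inv_smul_sub_inv_smul_sq (hw : ‖w‖ = 1) (hwh : ⟪w, h⟫ = 0) (p q : ℝ) :
    ‖‖p • w - h‖⁻¹ • (p • w - h) - ‖q • w + h‖⁻¹ • (q • w + h)‖ ^ 2 =
      (p / ‖p • w - h‖ - q / ‖q • w + h‖) ^ 2 +
        (‖h‖ / ‖p • w - h‖ + ‖h‖ / ‖q • w + h‖) ^ 2 := by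
  set A := ‖p • w - h‖
  set B := ‖q • w + h‖
  have hE : A⁻¹ • (p • w - h) - B⁻¹ • (q • w + h) = (p / A - q / B) • w + (-(A⁻¹ + B⁻¹)) • h := by
    simp only [div_eq_mul_inv]; module
  rw [hE, norm_smul_add_smul_sq hw hwh]
  ring

end Orthogonal

lemma sub_eq_and_sub_eq_of_eq_midpoint_add {V : Type*} [AddCommGroup V] [Module ℝ V]
    {x z w : V} {L : ℝ} (hxz : x - z = L • w) (s : ℝ) (h : V) :
    x - ((2 : ℝ)⁻¹ • (x + z) + s • w + h) = (L / 2 - s) • w - h ∧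
      (2 : ℝ)⁻¹ • (x + z) + s • w + h - z = (L / 2 + s) • w + h := by
  obtain rfl : z = x - L • w := by rw [← hxz]; abel
  constructor <;> module

lemma min_sub_add_eq_sub_abs (a s : ℝ) : min (a - s) (a + s) = a - |s| := by
  rw [← sub_neg_eq_add, min_sub_sub_left, ← abs_eq_max_neg]

theorem stmt2 :
    ∃ c > (0 : ℝ), ∃ C > (0 : ℝ), ∀ (n : ℕ), 2 ≤ n →
      ∀ x z y : EuclideanSpace ℝ (Fin n), x ≠ z → y ≠ x → y ≠ z →
        ∀ (s : ℝ) (h : EuclideanSpace ℝ (Fin n)),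
          y = (2 : ℝ)⁻¹ • (x + z) + s • (‖x - z‖⁻¹ • (x - z)) + h →
          (inner ℝ h (x - z) : ℝ) = 0 →
          ((0 < ‖h‖ ∧ ‖h‖ < ‖x - z‖ / 2 - |s| →
              c * (‖h‖ / min ‖x - y‖ ‖y - z‖) ≤
                ‖‖x - y‖⁻¹ • (x - y) - ‖y - z‖⁻¹ • (y - z)‖ ∧
              ‖‖x - y‖⁻¹ • (x - y) - ‖y - z‖⁻¹ • (y - z)‖ ≤
                C * (‖h‖ / min ‖x - y‖ ‖y - z‖)) ∧
            (‖x - z‖ / 2 - |s| < ‖h‖ →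
              c ≤ ‖‖x - y‖⁻¹ • (x - y) - ‖y - z‖⁻¹ • (y - z)‖ ∧
              ‖‖x - y‖⁻¹ • (x - y) - ‖y - z‖⁻¹ • (y - z)‖ ≤ 2)) := by
  refine ⟨1 / 2, by norm_num, 3, by norm_num, ?_⟩
  intro n _ x z y hxz hyx hyz s h hy hperp
  have hE_le_two : ‖‖x - y‖⁻¹ • (x - y) - ‖y - z‖⁻¹ • (y - z)‖ ≤ 2 := by
    have hu : ‖‖x - y‖⁻¹ • (x - y)‖ = 1 := norm_smul_inv_norm (sub_ne_zero.2 hyx.symm)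
    have hv : ‖‖y - z‖⁻¹ • (y - z)‖ = 1 := norm_smul_inv_norm (sub_ne_zero.2 hyz)
    linarith [norm_sub_le (‖x - y‖⁻¹ • (x - y)) (‖y - z‖⁻¹ • (y - z))]
  have hA : 0 < ‖x - y‖ := norm_sub_pos_iff.2 hyx.symm
  have hB : 0 < ‖y - z‖ := norm_sub_pos_iff.2 hyz
  set L := ‖x - z‖
  have hL : 0 < L := norm_sub_pos_iff.2 hxz
  set w := L⁻¹ • (x - z)
  have hw : ‖w‖ = 1 := norm_smul_inv_norm (sub_ne_zero.2 hxz)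
  have hwh : ⟪w, h⟫ = 0 := by rw [real_inner_smul_left, real_inner_comm, hperp, mul_zero]
  obtain ⟨hxy, hyz'⟩ : x - y = (L / 2 - s) • w - h ∧ y - z = (L / 2 + s) • w + h := hy ▸
    sub_eq_and_sub_eq_of_eq_midpoint_add (smul_inv_smul₀ hL.ne' (x - z)).symm s h
  simp only [hxy, hyz'] at hA hB hE_le_two ⊢
  have hE := norm_inv_smul_sub_inv_smul_sq hw hwh (L / 2 - s) (L / 2 + s)
  have hA2 := norm_smul_sub_sq hw hwh (L / 2 - s)
  have hB2 := norm_smul_add_sq hw hwh (L / 2 + s)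
  have hmin := min_sub_add_eq_sub_abs (L / 2) s
  have hr := norm_nonneg h
  refine ⟨fun ⟨_, hrΓ⟩ => ⟨?_, ?_⟩, fun hrΓ => ⟨?_, hE_le_two⟩⟩
  · have := (sq_le_sq₀ (by positivity) (norm_nonneg _)).1 (hE ▸ sq_div_min_le hr hA hB)
    linarith [div_nonneg hr (lt_min hA hB).le]
  · refine (sq_le_sq₀ (norm_nonneg _) (by positivity)).1 (hE ▸ ?_)
    exact le_sq_three_mul_div_min (by linarith [abs_nonneg s, le_abs_self s])
      (by linarith [abs_nonneg s, neg_abs_le s]) hr hA hB hA2 hB2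
  · refine (sq_le_sq₀ (by norm_num) (norm_nonneg _)).1 (hE ▸ ?_)
    exact quarter_le_of_min_lt (by linarith) hr (hmin ▸ hrΓ) hA hB hA2 hB2
end

section
/- For a nonempty finite subset $A\subset\mathbb{Z}$ and $i\in\mathbb{Z}$, define $N(A,i)=\min\{j\in A: j\ge i\}$ whenever $i\le\max A$, and define $D_iA = A\setminus\{N(A,i)\}$ if $A\ne\emptyset$ and $i\le\max A$, and $D_iA=A$ otherwise. Then for all finite $A\subset\mathbb{Z}$ and all $i,j\in\mathbb{Z}$, $D_iD_jA = D_jD_iA$. -/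
/-!
`Dop i` erases the least element `nᵢ` of `A` that is `≥ i`. If `nᵢ ≠ nⱼ`, erasing one of
them does not change which element the other operator erases, so both composites erase `{nᵢ, nⱼ}`.
If `nᵢ = nⱼ`, then no element of `A` lies between `i` and `j`, so `Dop i` and `Dop j` agree on
every subset of `A`.
-/

/-- `Dop i A` removes from `A` the smallest element that is `≥ i`, if such an
element exists (equivalently, if `A` is nonempty and `i ≤ max A`); otherwise it
is the identity. -/
def Dop (i : ℤ) (A : Finset ℤ) : Finset ℤ :=
  if h : (A.filter fun j => i ≤ j).Nonempty then
    A.erase ((A.filter fun j => i ≤ j).min' h)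
  else A

lemma Finset.le_iff_le_of_isLeast_filter {α : Type*} [Preorder α] [DecidableLE α]
    {A : Finset α} {i j a : α} (hi : IsLeast (A.filter (i ≤ ·) : Set α) a)
    (hj : IsLeast (A.filter (j ≤ ·) : Set α) a) {b : α} (hb : b ∈ A) : i ≤ b ↔ j ≤ b :=
  ⟨fun h => (Finset.mem_filter.mp hj.1).2.trans (hi.2 (Finset.mem_filter.mpr ⟨hb, h⟩)),
    fun h => (Finset.mem_filter.mp hi.1).2.trans (hj.2 (Finset.mem_filter.mpr ⟨hb, h⟩))⟩

namespace Dop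

variable {i j a b : ℤ} {A : Finset ℤ}

lemma subset (i : ℤ) (A : Finset ℤ) : Dop i A ⊆ A := by
  unfold Dop
  split
  · exact A.erase_subset _
  · exact subset_rfl

lemma eq_self_of_forall_lt (h : ∀ b ∈ A, b < i) : Dop i A = A := by
  have hempty : ¬ (A.filter (i ≤ ·)).Nonempty := by
    simpa [Finset.filter_nonempty_iff] using h
  rw [Dop, dif_neg hempty]

lemma eq_erase_of_isLeast (h : IsLeast (A.filter (i ≤ ·) : Set ℤ) a) :
    Dop i A = A.erase a := by
  have hne : (A.filter (i ≤ ·)).Nonempty := ⟨a, h.1⟩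
  rw [Dop, dif_pos hne, (Finset.isLeast_min' _ hne).unique h]

lemma erase_of_isLeast_of_ne (h : IsLeast (A.filter (i ≤ ·) : Set ℤ) a) (hba : b ≠ a) :
    Dop i (A.erase b) = (A.erase b).erase a := by
  obtain ⟨haA, hia⟩ := Finset.mem_filter.mp h.1
  refine eq_erase_of_isLeast ⟨?_, fun x hx => h.2 ?_⟩
  · exact Finset.mem_filter.mpr ⟨Finset.mem_erase.mpr ⟨hba.symm, haA⟩, hia⟩
  · exact Finset.filter_subset_filter _ (A.erase_subset b) hx

lemma congr_of_iff (h : ∀ b ∈ A, i ≤ b ↔ j ≤ b) : Dop i A = Dop j A := by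
  rw [Dop, Dop, Finset.filter_congr h]

lemma exists_isLeast (h : ∃ b ∈ A, i ≤ b) :
    ∃ a, IsLeast (A.filter (i ≤ ·) : Set ℤ) a :=
  ⟨_, Finset.isLeast_min' _ (Finset.filter_nonempty_iff.mpr h)⟩

end Dop

theorem stmt4 (A : Finset ℤ) (i j : ℤ) : Dop i (Dop j A) = Dop j (Dop i A) := by
  by_cases hi : ∀ b ∈ A, b < i
  · rw [Dop.eq_self_of_forall_lt hi,
      Dop.eq_self_of_forall_lt fun b hb => hi b (Dop.subset j A hb)]
  by_cases hj : ∀ b ∈ A, b < j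
  · rw [Dop.eq_self_of_forall_lt hj,
      Dop.eq_self_of_forall_lt fun b hb => hj b (Dop.subset i A hb)]
  push Not at hi hj
  obtain ⟨ni, hni⟩ := Dop.exists_isLeast hi
  obtain ⟨nj, hnj⟩ := Dop.exists_isLeast hj
  by_cases hn : ni = nj
  · subst hn
    have hiff : ∀ b ∈ A, i ≤ b ↔ j ≤ b := fun _ hb =>
      Finset.le_iff_le_of_isLeast_filter hni hnj hb
    rw [← Dop.congr_of_iff hiff,
      Dop.congr_of_iff fun b hb => hiff b (Dop.subset i A hb)]
  · rw [Dop.eq_erase_of_isLeast hni, Dop.eq_erase_of_isLeast hnj,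
      Dop.erase_of_isLeast_of_ne hni (Ne.symm hn), Dop.erase_of_isLeast_of_ne hnj hn,
      Finset.erase_right_comm]
end

section
/- Call a subset $A\subset\mathbb{N}_0\times\mathbb{N}_0$ admissible if: (1) $(i,j)\in A$ implies $i<j$; (2) $(i_1,j_1),(i_2,j_2)\in A$ and $i_1<j_2<j_1$ imply $i_1\le i_2$. Suppose $k\ge 1$ and $(\eta_j)_{j=1}^k$ are integers with $0\le\eta_j<j$ such that $\{(\eta_j,j): 1\le j\le k\}$ is admissible, and suppose there exists $s\in\{1,\dots,k\}$ with $\eta_s\le s-3$. Then there exists $\tau$ with $\eta_s<\tau<s$ such that for every $j\in\{\tau+1,\dots,k\}$, $\eta_j\notin\{\tau-1,\tau\}$. -/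
theorem stmt5 (k : ℕ) (hk : 1 ≤ k) (η : ℕ → ℕ)
    (hlt : ∀ j, 1 ≤ j → j ≤ k → η j < j)
    (hadm : ∀ j₁ j₂, 1 ≤ j₁ → j₁ ≤ k → 1 ≤ j₂ → j₂ ≤ k →
      η j₁ < j₂ → j₂ < j₁ → η j₁ ≤ η j₂)
    (s : ℕ) (hs1 : 1 ≤ s) (hsk : s ≤ k) (hs3 : η s + 3 ≤ s) :
    ∃ τ, η s < τ ∧ τ < s ∧
      ∀ j, τ + 1 ≤ j → j ≤ k → η j ≠ τ - 1 ∧ η j ≠ τ := by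
  refine ⟨s - 1, by omega, by omega, ?_⟩
  intro j hj1 hj2
  have hj : s ≤ j := by omega
  rcases eq_or_lt_of_le hj with rfl | hlt'
  · omega
  · by_cases h : η j < s
    · have := hadm j s (by omega) hj2 hs1 hsk h hlt'
      omega
    · omega
end

section
/- Let $n\ge 2$ and let $x,y,z\in\mathbb{R}^n$ be pairwise distinct, and set $E_{xyyz}=\frac{x-y}{|x-y|}-\frac{y-z}{|y-z|}$. Then for all multi-index derivatives of first order in $y$: each first-order partial derivative $\partial_{y_i}|E_{xyyz}|^{-1}$ satisfies $\big|\nabla_y |E_{xyyz}|^{-1}\big| \le C\, |E_{xyyz}|^{-2}\big(|x-y|^{-1}+|y-z|^{-1}\big)$ on the set where $E_{xyyz}\ne 0$, for an absolute constant $C$ depending only on $n$. -/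
/-!
As a function of `y`, `E_{xyyz}` is the difference of the unit-vector map `u v = ‖v‖⁻¹ • v`
evaluated at `x - y` and at `y - z`, and `‖Du(v)‖ ≤ 2 ‖v‖⁻¹`. Composing with `w ↦ ‖w‖⁻¹`, whose
derivative has norm at most `‖w‖⁻²`, gives the estimate with `C = 2` in every dimension.
-/

open ContinuousLinearMap

section

variable {E F : Type*} [NormedAddCommGroup E] [InnerProductSpace ℝ E]
  [NormedAddCommGroup F] [InnerProductSpace ℝ F]

lemma exists_hasFDerivAt_norm_inv_le {w : F} (hw : w ≠ 0) :
    ∃ G : F →L[ℝ] ℝ, HasFDerivAt (fun v : F => ‖v‖⁻¹) G w ∧ ‖G‖ ≤ ‖w‖⁻¹ ^ 2 := by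
  obtain ⟨N, hN⟩ : DifferentiableAt ℝ (fun v : F => ‖v‖) w :=
    differentiableAt_id.norm ℝ hw
  have hN_le : ‖N‖ ≤ 1 := by
    simpa using hN.le_of_lipschitz (lipschitzWith_one_norm (E := F))
  refine ⟨(-(‖w‖ ^ 2)⁻¹) • N, (hasDerivAt_inv (norm_ne_zero_iff.mpr hw)).comp_hasFDerivAt w hN, ?_⟩
  calc ‖(-(‖w‖ ^ 2)⁻¹) • N‖ = ‖w‖⁻¹ ^ 2 * ‖N‖ := by
        rw [norm_smul, norm_neg, Real.norm_of_nonneg (by positivity), inv_pow]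
    _ ≤ ‖w‖⁻¹ ^ 2 := mul_le_of_le_one_right (by positivity) hN_le

lemma exists_hasFDerivAt_inv_norm_smul_self_le {w : F} (hw : w ≠ 0) :
    ∃ D : F →L[ℝ] F, HasFDerivAt (fun v : F => ‖v‖⁻¹ • v) D w ∧ ‖D‖ ≤ 2 * ‖w‖⁻¹ := by
  obtain ⟨G, hG, hG_le⟩ := exists_hasFDerivAt_norm_inv_le hw
  refine ⟨_, hG.smul (hasFDerivAt_id w), ?_⟩
  have hw_pos : 0 < ‖w‖ := norm_pos_iff.mpr hw
  have h_id : ‖‖w‖⁻¹ • ContinuousLinearMap.id ℝ F‖ ≤ ‖w‖⁻¹ := by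
    rw [norm_smul, Real.norm_of_nonneg (by positivity)]
    exact mul_le_of_le_one_right (by positivity) norm_id_le
  have h_smulRight : ‖G.smulRight w‖ ≤ ‖w‖⁻¹ := by
    rw [norm_smulRight_apply]
    calc ‖G‖ * ‖w‖ ≤ ‖w‖⁻¹ ^ 2 * ‖w‖ := by gcongr
      _ = ‖w‖⁻¹ := by field_simp
  calc ‖‖w‖⁻¹ • ContinuousLinearMap.id ℝ F + G.smulRight w‖
      ≤ ‖‖w‖⁻¹ • ContinuousLinearMap.id ℝ F‖ + ‖G.smulRight w‖ := norm_add_le _ _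
    _ ≤ 2 * ‖w‖⁻¹ := by linarith

lemma exists_hasFDerivAt_unit_sub_unit_le {x y z : F} (hxy : x ≠ y) (hyz : y ≠ z) :
    ∃ D : F →L[ℝ] F,
      HasFDerivAt (fun y' : F => ‖x - y'‖⁻¹ • (x - y') - ‖y' - z‖⁻¹ • (y' - z)) D y ∧
        ‖D‖ ≤ 2 * (‖x - y‖⁻¹ + ‖y - z‖⁻¹) := by
  obtain ⟨D₁, hD₁, hD₁_le⟩ := exists_hasFDerivAt_inv_norm_smul_self_le (sub_ne_zero.mpr hxy)
  obtain ⟨D₂, hD₂, hD₂_le⟩ := exists_hasFDerivAt_inv_norm_smul_self_le (sub_ne_zero.mpr hyz)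
  have h₁ : HasFDerivAt (fun y' : F => ‖x - y'‖⁻¹ • (x - y')) (D₁.comp (-.id ℝ F)) y :=
    hD₁.comp y ((hasFDerivAt_id y).const_sub x)
  have h₂ : HasFDerivAt (fun y' : F => ‖y' - z‖⁻¹ • (y' - z)) (D₂.comp (.id ℝ F)) y :=
    (hD₂.comp y (hasFDerivAt_sub_const z) :)
  refine ⟨_, h₁.sub h₂, ?_⟩
  rw [comp_neg, comp_id]
  calc ‖-D₁ - D₂‖ ≤ ‖-D₁‖ + ‖D₂‖ := norm_sub_le _ _
    _ ≤ 2 * (‖x - y‖⁻¹ + ‖y - z‖⁻¹) := by rw [norm_neg]; linarith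

lemma norm_gradient_norm_inv_le [CompleteSpace E] {f : E → F} {f' : E →L[ℝ] F} {y : E}
    (hf : HasFDerivAt f f' y) (hy : f y ≠ 0) :
    ‖gradient (fun y' => ‖f y'‖⁻¹) y‖ ≤ ‖f y‖⁻¹ ^ 2 * ‖f'‖ := by
  obtain ⟨G, hG, hG_le⟩ := exists_hasFDerivAt_norm_inv_le hy
  have hg : HasFDerivAt (fun y' => ‖f y'‖⁻¹) (G.comp f') y := hG.comp y hf
  rw [hg.hasGradientAt.gradient, LinearIsometryEquiv.norm_map]
  calc ‖G.comp f'‖ ≤ ‖G‖ * ‖f'‖ := opNorm_comp_le _ _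
    _ ≤ ‖f y‖⁻¹ ^ 2 * ‖f'‖ := by gcongr

end

theorem stmt13_general (n : ℕ) :
    ∃ C > (0 : ℝ), ∀ x y z : EuclideanSpace ℝ (Fin n),
      x ≠ y → y ≠ z → x ≠ z →
      ‖x - y‖⁻¹ • (x - y) - ‖y - z‖⁻¹ • (y - z) ≠ 0 →
      ‖gradient
          (fun y' : EuclideanSpace ℝ (Fin n) =>
            ‖‖x - y'‖⁻¹ • (x - y') - ‖y' - z‖⁻¹ • (y' - z)‖⁻¹) y‖ ≤
        C * (‖‖x - y‖⁻¹ • (x - y) - ‖y - z‖⁻¹ • (y - z)‖⁻¹) ^ 2 *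
          (‖x - y‖⁻¹ + ‖y - z‖⁻¹) := by
  refine ⟨2, two_pos, fun x y z hxy hyz _ hE => ?_⟩
  obtain ⟨D, hD, hD_le⟩ := exists_hasFDerivAt_unit_sub_unit_le hxy hyz
  calc _ ≤ _ * ‖D‖ := norm_gradient_norm_inv_le hD hE
    _ ≤ _ * (2 * (‖x - y‖⁻¹ + ‖y - z‖⁻¹)) := by gcongr
    _ = _ := by ring

theorem stmt13 (n : ℕ) (hn : 2 ≤ n) :
    ∃ C > (0 : ℝ), ∀ x y z : EuclideanSpace ℝ (Fin n),
      x ≠ y → y ≠ z → x ≠ z →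
      ‖x - y‖⁻¹ • (x - y) - ‖y - z‖⁻¹ • (y - z) ≠ 0 →
      ‖gradient
          (fun y' : EuclideanSpace ℝ (Fin n) =>
            ‖‖x - y'‖⁻¹ • (x - y') - ‖y' - z‖⁻¹ • (y' - z)‖⁻¹) y‖ ≤
        C * (‖‖x - y‖⁻¹ • (x - y) - ‖y - z‖⁻¹ • (y - z)‖⁻¹) ^ 2 *
          (‖x - y‖⁻¹ + ‖y - z‖⁻¹) :=
  stmt13_general n
end
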